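/- arXiv:2602.14851 — 2 statements merged into one kernel-verified Lean document; each statement's English description precedes it below -/
import Mathlib

section
/- Let $\{\Delta_1, \dots, \Delta_s\}$ be a generalized nef partition of $\Delta$ associated to the partition $\mathrm{Vert}(\Delta^\circ) = I_1 \sqcup \cdots \sqcup I_s$, and define $\nabla_j = \{ n \in N_{\mathbb{R}} : \langle m, n \rangle \geq -\delta_{i,j} \text{ for all } m \in \Delta_i,\ i = 1, \dots, s\}$. Then $\nabla_j = \mathrm{Conv}(\{0\} \cup I_j)$ for each $j$. -/
open scoped RealInnerProductSpace Pointwise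

namespace GNPPaper

variable {d s : ℕ}

abbrev E (d : ℕ) := EuclideanSpace ℝ (Fin d)

/-- Polar with the paper's sign convention `⟨x,y⟩ ≥ -1`. -/
def pol (A : Set (E d)) : Set (E d) := {y | ∀ x ∈ A, (-1 : ℝ) ≤ (inner ℝ x y : ℝ)}

/-- Vertices = extreme points. -/
def Vert (A : Set (E d)) : Set (E d) := Set.extremePoints ℝ A

/-- Indicator function of a set. -/
noncomputable def ind (I : Set (E d)) (v : E d) : ℝ := I.indicator (fun _ => 1) v

/-- The piece `Δ_i` associated to a part `I` of the vertices of the polar of `A`. -/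
def pieceD (A : Set (E d)) (I : Set (E d)) : Set (E d) :=
  {m | ∀ v ∈ Vert (pol A), -(ind I v) ≤ (inner ℝ m v : ℝ)}

def IsPolytope (A : Set (E d)) : Prop :=
  ∃ F : Finset (E d), A = convexHull ℝ (F : Set (E d))

def IsVertPartition (A : Set (E d)) (I : Fin s → Set (E d)) : Prop :=
  (∀ i, I i ⊆ Vert (pol A)) ∧ ∀ v ∈ Vert (pol A), ∃! i, v ∈ I i

/-- `I` induces a generalized nef partition of `A`. -/
def IsGNP (A : Set (E d)) (I : Fin s → Set (E d)) : Prop :=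
  IsPolytope A ∧ (0 : E d) ∈ interior A ∧ IsVertPartition A I ∧
    (∑ i, pieceD A (I i)) = A

/-- The dual piece `∇_j`. -/
def pieceN (A : Set (E d)) (I : Fin s → Set (E d)) (j : Fin s) : Set (E d) :=
  {y | ∀ i : Fin s, ∀ m ∈ pieceD A (I i), -(if i = j then (1:ℝ) else 0) ≤ (inner ℝ m y : ℝ)}

def nab (A : Set (E d)) (I : Fin s → Set (E d)) : Set (E d) := ∑ j, pieceN A I j

/-- A facet: a nonempty proper face of codimension one. -/
def IsFacet (A F : Set (E d)) : Prop :=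
  IsExtreme ℝ A F ∧ F.Nonempty ∧ F ≠ A ∧
    Module.finrank ℝ ↥(vectorSpan ℝ F) + 1 = d

/-- Cone of nonnegative real combinations of elements of `S`. -/
def coneOf (S : Set (E d)) : Set (E d) :=
  {x | ∃ (t : Finset (E d)) (c : E d → ℝ), (t : Set (E d)) ⊆ S ∧ (∀ v, 0 ≤ c v) ∧
      x = ∑ v ∈ t, c v • v}

def IsLatticeSet (S : Set (E d)) : Prop := ∀ v ∈ S, ∀ k : Fin d, ∃ z : ℤ, v k = (z : ℝ)

/-- A full-dimensional simplex. -/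
def IsSimplex (S : Set (E d)) : Prop :=
  ∃ F : Finset (E d), S = convexHull ℝ (F : Set (E d)) ∧ F.card = d + 1 ∧
    AffineIndependent ℝ (fun v : F => (v : E d))

/-- Good pair of generalized nef partitions. -/
def IsGoodPair (A1 A2 : Set (E d)) (I1 I2 : Fin s → Set (E d)) : Prop :=
  IsGNP A1 I1 ∧ IsGNP A2 I2 ∧
  (∀ i, pieceD A1 (I1 i) ⊆ pieceD A2 (I2 i)) ∧
  (∀ i, IsLatticeSet (Vert (pieceD A1 (I1 i)))) ∧
  IsLatticeSet (Vert A1) ∧ IsLatticeSet (Vert (pol A2)) ∧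
  (0 : E d) ∈ interior A1 ∧ (0 : E d) ∈ interior (pol A2)



section Helpers

variable {d s : ℕ}

lemma pol_convex (A : Set (E d)) : Convex ℝ (pol A) := by
  intro y1 hy1 y2 hy2 a b ha hb hab
  intro x hx
  have h1 := hy1 x hx
  have h2 := hy2 x hx
  have : (inner ℝ x (a • y1 + b • y2) : ℝ) = a * inner ℝ x y1 + b * inner ℝ x y2 := by
    rw [inner_add_right, real_inner_smul_right, real_inner_smul_right]
  rw [this]
  nlinarith

lemma pol_isClosed (A : Set (E d)) : IsClosed (pol A) := by
  have : pol A = ⋂ (x : A), {y : E d | (-1 : ℝ) ≤ (inner ℝ (x : E d) y : ℝ)} := by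
    ext y; simp [pol, Set.mem_iInter]
  rw [this]
  exact isClosed_iInter fun x =>
    isClosed_le continuous_const (Continuous.inner continuous_const continuous_id)

lemma pol_isCompact (A : Set (E d)) (h0 : (0 : E d) ∈ interior A) : IsCompact (pol A) := by
  obtain ⟨ε, hε, hball⟩ := Metric.isOpen_iff.1 isOpen_interior 0 h0
  have hsub : pol A ⊆ Metric.closedBall 0 (2 / ε) := by
    intro y hy
    rcases eq_or_ne y 0 with rfl | hy0
    · simp [Metric.mem_closedBall]; positivity
    · have hny : (0:ℝ) < ‖y‖ := norm_pos_iff.2 hy0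
      set x : E d := (-(ε / 2) * ‖y‖⁻¹) • y with hx
      have hxball : x ∈ Metric.ball (0 : E d) ε := by
        rw [Metric.mem_ball, dist_zero_right, hx, norm_smul]
        have : ‖(-(ε / 2) * ‖y‖⁻¹ : ℝ)‖ = (ε / 2) * ‖y‖⁻¹ := by
          rw [Real.norm_eq_abs, abs_mul, abs_neg, abs_of_nonneg (by positivity),
            abs_of_nonneg (by positivity)]
        rw [this, mul_assoc, inv_mul_cancel₀ hny.ne', mul_one]
        linarith
      have hxA : x ∈ A := interior_subset (hball hxball)
      have := hy x hxA
      rw [hx, real_inner_smul_left, real_inner_self_eq_norm_sq] at this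
      have h2 : (-(ε / 2) * ‖y‖⁻¹) * ‖y‖ ^ 2 = -(ε / 2) * ‖y‖ := by
        field_simp
      rw [h2] at this
      rw [Metric.mem_closedBall, dist_zero_right]
      rw [le_div_iff₀ hε]
      nlinarith
  exact IsCompact.of_isClosed_subset
    ((Metric.isBounded_closedBall (x := (0:E d)) (r := 2/ε)).subset hsub).isCompact_closure
    (pol_isClosed A) subset_closure

lemma pol_convexHull_eq (F : Set (E d)) : pol (convexHull ℝ F) = pol F := by
  apply Set.Subset.antisymm
  · intro y hy x hx
    exact hy x (subset_convexHull ℝ F hx)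
  · intro y hy x hx
    have hconv : Convex ℝ {x : E d | (-1 : ℝ) ≤ (inner ℝ x y : ℝ)} := by
      have : IsLinearMap ℝ (fun x : E d => (inner ℝ x y : ℝ)) :=
        ⟨fun a b => inner_add_left a b y, fun c a => real_inner_smul_left a y c⟩
      exact convex_halfSpace_ge this (-1)
    exact convexHull_min hy hconv hx

open Classical in
lemma pol_finset_extremePoints_finite (F₀ : Finset (E d)) :
    (Set.extremePoints ℝ (pol (↑F₀ : Set (E d)))).Finite := by
  set H := pol (↑F₀ : Set (E d)) with hH
  set f : E d → Finset (E d) := fun y => F₀.filter (fun x => (inner ℝ x y : ℝ) = -1) with hf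
  have hinj : Set.InjOn f (Set.extremePoints ℝ H) := by
    intro y1 hy1 y2 hy2 hT
    by_contra hne
    set T := f y1 with hTdef
    set h : E d → ℝ := fun x =>
      if x ∈ T then 1 else ((inner ℝ x y1 : ℝ) + 1) / (|(inner ℝ x (y2 - y1) : ℝ)| + 1) with hh
    set S : Finset ℝ := insert (1 : ℝ) (F₀.image h) with hS
    have hSne : S.Nonempty := ⟨1, Finset.mem_insert_self _ _⟩
    set ε := S.min' hSne with hε
    have hεle1 : ε ≤ 1 := Finset.min'_le _ _ (Finset.mem_insert_self _ _)
    have hεle : ∀ x ∈ F₀, ε ≤ h x := fun x hx =>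
      Finset.min'_le _ _ (Finset.mem_insert_of_mem (Finset.mem_image_of_mem h hx))
    have hstrict : ∀ x ∈ F₀, x ∉ T → (-1 : ℝ) < (inner ℝ x y1 : ℝ) := by
      intro x hx hxT
      have hge : (-1 : ℝ) ≤ (inner ℝ x y1 : ℝ) := hy1.1 x hx
      rcases lt_or_eq_of_le hge with h' | h'
      · exact h'
      · exact absurd (Finset.mem_filter.2 ⟨hx, h'.symm⟩) hxT
    have hpos : 0 < ε := by
      have hmem := Finset.min'_mem S hSne
      rcases Finset.mem_insert.1 hmem with h1 | h1
      · show (0:ℝ) < S.min' hSne; rw [h1]; norm_num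
      · obtain ⟨x, hx, hxe⟩ := Finset.mem_image.1 h1
        rw [hε, ← hxe, hh]
        by_cases hxT : x ∈ T
        · simp [hxT]
        · simp only [hxT, if_false]
          have hnum : (0:ℝ) < (inner ℝ x y1 : ℝ) + 1 := by linarith [hstrict x hx hxT]
          have hden : (0:ℝ) < |(inner ℝ x (y2 - y1) : ℝ)| + 1 := by positivity
          exact div_pos hnum hden
    have hkey : ∀ (σ : ℝ), σ = 1 ∨ σ = -1 → y1 + (σ * ε) • (y2 - y1) ∈ H := by
      intro σ hσ x hx
      have habs : |σ| = 1 := by rcases hσ with rfl | rfl <;> norm_num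
      have hval : (inner ℝ x (y1 + (σ * ε) • (y2 - y1)) : ℝ)
          = (inner ℝ x y1 : ℝ) + (σ * ε) * (inner ℝ x (y2 - y1) : ℝ) := by
        rw [inner_add_right, real_inner_smul_right]
      rw [hval]
      by_cases hxT : x ∈ T
      · have h1 : (inner ℝ x y1 : ℝ) = -1 := (Finset.mem_filter.1 hxT).2
        have hxT2 : x ∈ f y2 := hT ▸ hxT
        have h2 : (inner ℝ x y2 : ℝ) = -1 := (Finset.mem_filter.1 hxT2).2
        have : (inner ℝ x (y2 - y1) : ℝ) = 0 := by rw [inner_sub_right, h1, h2]; ring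
        rw [this, h1]; ring_nf; norm_num
      · have hlt := hstrict x hx hxT
        have hle := hεle x hx
        rw [hh] at hle
        simp only [hxT, if_false] at hle
        have hden : (0:ℝ) < |(inner ℝ x (y2 - y1) : ℝ)| + 1 := by positivity
        rw [le_div_iff₀ hden] at hle
        have h' : |(σ * ε) * (inner ℝ x (y2 - y1) : ℝ)| ≤ ε * (|(inner ℝ x (y2 - y1) : ℝ)| + 1) := by
          rw [abs_mul, abs_mul, habs, one_mul, abs_of_pos hpos]
          nlinarith [abs_nonneg ((inner ℝ x (y2 - y1) : ℝ))]
        have := neg_abs_le ((σ * ε) * (inner ℝ x (y2 - y1) : ℝ))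
        nlinarith
    have hz1 := hkey 1 (Or.inl rfl)
    have hz2 := hkey (-1) (Or.inr rfl)
    simp only [one_mul, neg_mul] at hz1 hz2
    have hmid : y1 ∈ openSegment ℝ (y1 + ε • (y2 - y1)) (y1 + (-ε) • (y2 - y1)) := by
      refine ⟨1/2, 1/2, by norm_num, by norm_num, by norm_num, ?_⟩
      rw [smul_add, smul_add, smul_smul, smul_smul]
      module
    have := hy1.2 hz1 hz2 hmid
    have h0 : ε • (y2 - y1) = 0 := by
      have h' : y1 + ε • (y2 - y1) = y1 + 0 := by rw [this, add_zero]
      exact add_left_cancel h'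
    rw [smul_eq_zero] at h0
    rcases h0 with h0 | h0
    · exact absurd h0 hpos.ne'
    · rw [sub_eq_zero] at h0
      exact hne h0.symm
  have himg : f '' (Set.extremePoints ℝ H) ⊆ ↑F₀.powerset := by
    rintro _ ⟨y, _, rfl⟩
    simp only [Finset.coe_powerset, Set.mem_preimage, Set.mem_powerset_iff]
    exact Finset.coe_subset.2 (Finset.filter_subset _ _)
  exact Set.Finite.of_finite_image ((F₀.powerset.finite_toSet).subset himg) hinj

lemma eq_convexHull_extremePoints {K : Set (E d)} (hK : IsCompact K) (hc : Convex ℝ K)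
    (hfin : (Set.extremePoints ℝ K).Finite) :
    K = convexHull ℝ (Set.extremePoints ℝ K) := by
  have h1 := closure_convexHull_extremePoints hK hc
  rw [(hfin.isClosed_convexHull ℝ).closure_eq] at h1
  exact h1.symm

lemma ind_nonneg (I : Set (E d)) (v : E d) : 0 ≤ ind I v :=
  Set.indicator_nonneg (fun _ _ => zero_le_one) v

lemma ind_of_mem {I : Set (E d)} {v : E d} (h : v ∈ I) : ind I v = 1 :=
  Set.indicator_of_mem h _

lemma ind_of_not_mem {I : Set (E d)} {v : E d} (h : v ∉ I) : ind I v = 0 :=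
  Set.indicator_of_notMem h _

lemma sum_ind_eq_one {I : Fin s → Set (E d)} {v : E d} (h : ∃! i, v ∈ I i) :
    ∑ i, ind (I i) v = 1 := by
  obtain ⟨i₀, hi₀, huniq⟩ := h
  rw [Finset.sum_eq_single i₀]
  · exact ind_of_mem hi₀
  · intro b _ hb
    exact ind_of_not_mem (fun hv => hb (huniq b hv))
  · intro hmem
    exact absurd (Finset.mem_univ i₀) hmem

end Helpers

/-- `∇_j = Conv({0} ∪ I_j)`. -/
theorem pieceN_eq_convexHull (A : Set (E d)) (I : Fin s → Set (E d)) (hGNP : IsGNP A I) :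
    ∀ j : Fin s, pieceN A I j = convexHull ℝ ({(0 : E d)} ∪ I j) := by
  classical
  obtain ⟨⟨F₀, hAeq⟩, h0, ⟨hIsub, hIuniq⟩, hsum⟩ := hGNP
  intro j
  apply Set.Subset.antisymm
  · -- hard direction
    intro y hy
    have hypol : y ∈ pol A := by
      intro x hx
      rw [← hsum, Set.mem_fintype_sum] at hx
      obtain ⟨g, hg, hgsum⟩ := hx
      have hx' : (inner ℝ x y : ℝ) = ∑ i, (inner ℝ (g i) y : ℝ) := by
        rw [← hgsum, sum_inner]
      rw [hx']
      have hterm : ∀ i, -(if i = j then (1:ℝ) else 0) ≤ (inner ℝ (g i) y : ℝ) :=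
        fun i => hy i (g i) (hg i)
      calc (-1:ℝ) = ∑ i : Fin s, -(if i = j then (1:ℝ) else 0) := by
            simp [Finset.sum_ite_eq']
        _ ≤ _ := Finset.sum_le_sum fun i _ => hterm i
    have hAcomp : IsCompact A := by
      rw [hAeq]; exact F₀.finite_toSet.isCompact_convexHull ℝ
    have hAne : A.Nonempty := ⟨0, interior_subset h0⟩
    have hcont : Continuous fun x : E d => (inner ℝ x y : ℝ) :=
      Continuous.inner continuous_id continuous_const
    obtain ⟨m₀, hm₀A, hmin⟩ := hAcomp.exists_isMinOn hAne hcont.continuousOn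
    set μ := (inner ℝ m₀ y : ℝ) with hμ
    have hμ1 : -1 ≤ μ := hypol m₀ hm₀A
    rcases le_or_gt 0 μ with hμ0 | hμ0
    · -- y = 0
      have hy0 : y = 0 := by
        by_contra hne
        obtain ⟨ε, hε, hball⟩ := Metric.isOpen_iff.1 isOpen_interior 0 h0
        have hny : (0:ℝ) < ‖y‖ := norm_pos_iff.2 hne
        set x : E d := (-(ε / 2) * ‖y‖⁻¹) • y with hx
        have hxball : x ∈ Metric.ball (0 : E d) ε := by
          rw [Metric.mem_ball, dist_zero_right, hx, norm_smul]
          have : ‖(-(ε / 2) * ‖y‖⁻¹ : ℝ)‖ = (ε / 2) * ‖y‖⁻¹ := by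
            rw [Real.norm_eq_abs, abs_mul, abs_neg, abs_of_nonneg (by positivity),
              abs_of_nonneg (by positivity)]
          rw [this, mul_assoc, inv_mul_cancel₀ hny.ne', mul_one]
          linarith
        have hxA : x ∈ A := interior_subset (hball hxball)
        have h1 : μ ≤ (inner ℝ x y : ℝ) := hmin hxA
        rw [hx, real_inner_smul_left, real_inner_self_eq_norm_sq] at h1
        have h2 : (-(ε / 2) * ‖y‖⁻¹) * ‖y‖ ^ 2 = -(ε / 2) * ‖y‖ := by
          field_simp
        rw [h2] at h1
        nlinarith
      rw [hy0]
      exact subset_convexHull ℝ _ (Or.inl rfl)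
    · set t : ℝ := -μ with ht
      have htpos : 0 < t := by rw [ht]; linarith
      have htle : t ≤ 1 := by rw [ht]; linarith
      set y' : E d := t⁻¹ • y with hy'def
      have hyy : y = t • y' := by
        rw [hy'def, smul_smul, mul_inv_cancel₀ htpos.ne', one_smul]
      have hy'pol : y' ∈ pol A := by
        intro x hx
        have h1 : μ ≤ (inner ℝ x y : ℝ) := hmin hx
        have h2 : (inner ℝ x y' : ℝ) = t⁻¹ * (inner ℝ x y : ℝ) := by
          rw [hy'def, real_inner_smul_right]
        rw [h2]
        have h3 : t⁻¹ * μ = -1 := by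
          rw [ht]; field_simp; rw [div_self hμ0.ne]
        rw [← h3]
        exact mul_le_mul_of_nonneg_left h1 (inv_nonneg.2 htpos.le)
      have hm₀y' : (inner ℝ m₀ y' : ℝ) = -1 := by
        rw [hy'def, real_inner_smul_right, ← hμ, ht]
        field_simp; rw [div_self hμ0.ne]
      set F : Set (E d) := {z ∈ pol A | (inner ℝ m₀ z : ℝ) = -1} with hFdef
      have hy'F : y' ∈ F := ⟨hy'pol, hm₀y'⟩
      have hFexp : IsExposed ℝ (pol A) F := by
        intro _
        refine ⟨-(innerSL ℝ m₀), ?_⟩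
        ext z
        constructor
        · rintro ⟨hz, hz1⟩
          refine ⟨hz, fun w hw => ?_⟩
          simp only [ContinuousLinearMap.neg_apply, innerSL_apply_apply]
          have : (-1:ℝ) ≤ (inner ℝ m₀ w : ℝ) := hw m₀ hm₀A
          rw [hz1]
          linarith
        · rintro ⟨hz, hmax⟩
          refine ⟨hz, ?_⟩
          have h1 := hmax y' hy'pol
          simp only [ContinuousLinearMap.neg_apply, innerSL_apply_apply] at h1
          rw [hm₀y'] at h1
          have h2 : (-1:ℝ) ≤ (inner ℝ m₀ z : ℝ) := hz m₀ hm₀A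
          linarith
      have hFext : IsExtreme ℝ (pol A) F := hFexp.isExtreme
      have hFcomp : IsCompact F := by
        apply IsCompact.of_isClosed_subset (pol_isCompact A h0)
        · have : F = pol A ∩ {z : E d | (inner ℝ m₀ z : ℝ) = -1} := by
            ext z; simp [hFdef, Set.mem_sep_iff]
          rw [this]
          exact (pol_isClosed A).inter
            (isClosed_eq (Continuous.inner continuous_const continuous_id) continuous_const)
        · exact fun z hz => hz.1
      have hFconv : Convex ℝ F := by
        intro z1 hz1 z2 hz2 a b ha hb hab
        refine ⟨pol_convex A hz1.1 hz2.1 ha hb hab, ?_⟩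
        rw [inner_add_right, real_inner_smul_right, real_inner_smul_right, hz1.2, hz2.2]
        linarith
      have hpolfin : (Set.extremePoints ℝ (pol A)).Finite := by
        have : pol A = pol (↑F₀ : Set (E d)) := by rw [hAeq, pol_convexHull_eq]
        rw [this]
        exact pol_finset_extremePoints_finite F₀
      have hFfin : (Set.extremePoints ℝ F).Finite :=
        hpolfin.subset hFext.extremePoints_subset_extremePoints
      have hFeq := eq_convexHull_extremePoints hFcomp hFconv hFfin
      have hy'hull : y' ∈ convexHull ℝ (Set.extremePoints ℝ F) := hFeq ▸ hy'F
      rw [convexHull_eq] at hy'hull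
      obtain ⟨ι, tf, w, z, hw0, hw1, hz, hcm⟩ := hy'hull
      have hzF : ∀ k ∈ tf, z k ∈ F := fun k hk => extremePoints_subset (hz k hk)
      have hzV : ∀ k ∈ tf, z k ∈ Vert (pol A) := fun k hk =>
        hFext.extremePoints_subset_extremePoints (hz k hk)
      have hm₀A' := hm₀A
      rw [← hsum, Set.mem_fintype_sum] at hm₀A'
      obtain ⟨g, hg, hgsum⟩ := hm₀A'
      have hforce : ∀ k ∈ tf, ∀ i, (inner ℝ (g i) (z k) : ℝ) = -(ind (I i) (z k)) := by
        intro k hk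
        have hv := hzV k hk
        have hle : ∀ i ∈ Finset.univ, -(ind (I i) (z k)) ≤ (inner ℝ (g i) (z k) : ℝ) :=
          fun i _ => hg i (z k) hv
        have h1 : ∑ i, (inner ℝ (g i) (z k) : ℝ) = (inner ℝ m₀ (z k) : ℝ) := by
          rw [← hgsum, sum_inner]
        have h2 : ∑ i, -(ind (I i) (z k)) = -1 := by
          rw [Finset.sum_neg_distrib, sum_ind_eq_one (hIuniq (z k) hv)]
        have hsums : ∑ i, -(ind (I i) (z k)) = ∑ i, (inner ℝ (g i) (z k) : ℝ) := by
          rw [h1, h2, (hzF k hk).2]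
        intro i
        exact ((Finset.sum_eq_sum_iff_of_le hle).1 hsums i (Finset.mem_univ i)).symm
      have hy'sum : y' = ∑ k ∈ tf, w k • z k := by
        rw [← hcm, Finset.centerMass_eq_of_sum_1 _ _ hw1]
      have hkill : ∀ i, i ≠ j → ∀ k ∈ tf, w k * ind (I i) (z k) = 0 := by
        intro i hij
        have h0le : (0:ℝ) ≤ (inner ℝ (g i) y : ℝ) := by
          have := hy i (g i) (hg i)
          simpa [if_neg hij] using this
        have hval : (inner ℝ (g i) y : ℝ) = t * ∑ k ∈ tf, w k * (inner ℝ (g i) (z k) : ℝ) := by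
          rw [hyy, real_inner_smul_right, hy'sum, inner_sum]
          congr 1
          exact Finset.sum_congr rfl fun k _ => real_inner_smul_right _ _ _
        have hval2 : (inner ℝ (g i) y : ℝ) = -(t * ∑ k ∈ tf, w k * ind (I i) (z k)) := by
          rw [hval]
          rw [show (∑ k ∈ tf, w k * (inner ℝ (g i) (z k) : ℝ))
              = ∑ k ∈ tf, -(w k * ind (I i) (z k)) from
            Finset.sum_congr rfl fun k hk => by rw [hforce k hk i]; ring]
          rw [Finset.sum_neg_distrib]
          ring
        have hSle : ∑ k ∈ tf, w k * ind (I i) (z k) ≤ 0 := by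
          rw [hval2] at h0le
          nlinarith
        have hSzero : ∑ k ∈ tf, w k * ind (I i) (z k) = 0 :=
          le_antisymm hSle (Finset.sum_nonneg fun k hk =>
            mul_nonneg (hw0 k hk) (ind_nonneg _ _))
        exact fun k hk => (Finset.sum_eq_zero_iff_of_nonneg fun k hk =>
          mul_nonneg (hw0 k hk) (ind_nonneg _ _)).1 hSzero k hk
      set tf' := tf.filter (fun k => w k ≠ 0) with htf'
      have hzIj : ∀ k ∈ tf', z k ∈ I j := by
        intro k hk
        obtain ⟨hk1, hk2⟩ := Finset.mem_filter.1 hk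
        obtain ⟨i₀, hi₀, huniq⟩ := hIuniq (z k) (hzV k hk1)
        by_cases hij : i₀ = j
        · exact hij ▸ hi₀
        · exfalso
          have hzero := hkill i₀ hij k hk1
          rw [ind_of_mem hi₀, mul_one] at hzero
          exact hk2 hzero
      have hwsum' : ∑ k ∈ tf', w k = 1 := by
        rw [← hw1]
        apply Finset.sum_subset (Finset.filter_subset _ _)
        intro k hk hk'
        by_contra hzero
        exact hk' (Finset.mem_filter.2 ⟨hk, hzero⟩)
      have hy'sum' : y' = ∑ k ∈ tf', w k • z k := by
        rw [hy'sum]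
        refine (Finset.sum_subset (Finset.filter_subset _ _) fun k hk hk' => ?_).symm
        have hwk : w k = 0 := by
          by_contra h
          exact hk' (Finset.mem_filter.2 ⟨hk, h⟩)
        rw [hwk, zero_smul]
      have hy'conv : y' ∈ convexHull ℝ (I j) := by
        have := Finset.centerMass_mem_convexHull tf'
          (fun k hk => hw0 k (Finset.filter_subset _ _ hk))
          (by rw [hwsum']; norm_num) (fun k hk => hzIj k hk)
        rwa [Finset.centerMass_eq_of_sum_1 _ _ hwsum', ← hy'sum'] at this
      have h0hull : (0:E d) ∈ convexHull ℝ ({(0:E d)} ∪ I j) :=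
        subset_convexHull ℝ _ (Or.inl rfl)
      have hy'hull2 : y' ∈ convexHull ℝ ({(0:E d)} ∪ I j) :=
        convexHull_mono Set.subset_union_right hy'conv
      have hfin := (convex_convexHull ℝ ({(0:E d)} ∪ I j)) hy'hull2 h0hull
        htpos.le (by linarith : (0:ℝ) ≤ 1 - t) (by ring)
      have : t • y' + (1 - t) • (0:E d) = y := by
        rw [smul_zero, add_zero, ← hyy]
      rwa [this] at hfin
  · -- easy direction
    apply convexHull_min
    · intro x hx
      rcases hx with hx | hx
      · rw [Set.mem_singleton_iff] at hx
        subst hx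
        intro i m _
        rw [inner_zero_right]
        split_ifs <;> norm_num
      · intro i m hm
        have hxV : x ∈ Vert (pol A) := hIsub j hx
        have h1 : -(ind (I i) x) ≤ (inner ℝ m x : ℝ) := hm x hxV
        have h2 : -(if i = j then (1:ℝ) else 0) ≤ -(ind (I i) x) := by
          by_cases hij : i = j
          · subst hij
            rw [if_pos rfl, ind_of_mem hx]
          · have hni : x ∉ I i := by
              intro hxi
              obtain ⟨i₀, _, huniq⟩ := hIuniq x hxV
              exact hij ((huniq i hxi).trans (huniq j hx).symm)
            rw [if_neg hij, ind_of_not_mem hni]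
        linarith
    · intro y1 hy1 y2 hy2 a b ha hb hab
      intro i m hm
      have h1 := hy1 i m hm
      have h2 := hy2 i m hm
      have : (inner ℝ m (a • y1 + b • y2) : ℝ) = a * inner ℝ m y1 + b * inner ℝ m y2 := by
        rw [inner_add_right, real_inner_smul_right, real_inner_smul_right]
      rw [this]
      have h3 := add_le_add (mul_le_mul_of_nonneg_left h1 ha) (mul_le_mul_of_nonneg_left h2 hb)
      have heq : a * (-(if i = j then (1:ℝ) else 0)) + b * (-(if i = j then (1:ℝ) else 0))
          = -(if i = j then (1:ℝ) else 0) := by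
        split_ifs <;> linarith
      linarith [h3, heq.symm.le, heq.le]

end GNPPaper
end

section
/- Let $\{\Delta_1, \dots, \Delta_s\}$ be a generalized nef partition, let $\{1, \dots, s\} = A \sqcup B$ with $A, B$ nonempty, and let $C_A$ (resp. $C_B$) be the cone of all nonnegative real linear combinations of the vertices of the polytopes $\Delta_i$ for $i \in A$ (resp. $i \in B$). Then $C_A \cap C_B = \{0\}$. -/
open scoped RealInnerProductSpace Pointwise

namespace GNPPaper

variable {d s : ℕ}

/-- Auxiliary: a cone element pairs nonnegatively with a polar vertex avoiding all parts used. -/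
lemma cone_inner_nonneg {d s : ℕ} {A : Set (E d)} {I : Fin s → Set (E d)} (S : Set (Fin s))
    {x : E d} (hx : x ∈ coneOf (⋃ i ∈ S, Vert (pieceD A (I i))))
    {n : E d} (hn : n ∈ Vert (pol A)) (hni : ∀ i ∈ S, n ∉ I i) :
    0 ≤ (inner ℝ x n : ℝ) := by
  obtain ⟨t, c, ht, hc, rfl⟩ := hx
  rw [sum_inner]
  refine Finset.sum_nonneg fun v hv => ?_
  rw [real_inner_smul_left]
  refine mul_nonneg (hc v) ?_
  have hvmem := ht hv
  simp only [Set.mem_iUnion] at hvmem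
  obtain ⟨i, hiS, hvi⟩ := hvmem
  have hvD : v ∈ pieceD A (I i) := extremePoints_subset hvi
  have := hvD n hn
  rwa [ind, Set.indicator_of_notMem (hni i hiS), neg_zero] at this

/-- the cones generated by the vertices of complementary groups of pieces
meet only in the origin. -/
theorem cone_inter (A : Set (E d)) (I : Fin s → Set (E d)) (hGNP : IsGNP A I)
    (P : Finset (Fin s)) (hP : P.Nonempty) (hP' : P ≠ Finset.univ) :
    coneOf (⋃ i ∈ (P : Set (Fin s)), Vert (pieceD A (I i))) ∩
      coneOf (⋃ i ∈ ((P : Set (Fin s)))ᶜ, Vert (pieceD A (I i))) = {(0 : E d)} := by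
  obtain ⟨⟨F, hF⟩, h0, ⟨_, hPart⟩, -⟩ := hGNP
  apply Set.eq_singleton_iff_unique_mem.mpr
  constructor
  · exact ⟨⟨∅, fun _ => 0, by simp, fun _ => le_rfl, by simp⟩,
      ⟨∅, fun _ => 0, by simp, fun _ => le_rfl, by simp⟩⟩
  rintro x ⟨hxA, hxB⟩
  -- x pairs nonnegatively with every extreme point of pol A
  have hkey : ∀ n ∈ Vert (pol A), 0 ≤ (inner ℝ x n : ℝ) := by
    intro n hn
    obtain ⟨i₀, hi₀, huniq⟩ := hPart n hn
    by_cases hcase : i₀ ∈ P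
    · refine cone_inner_nonneg ((P : Set (Fin s)))ᶜ hxB hn fun i hi hni => ?_
      exact hi (huniq i hni ▸ hcase)
    · refine cone_inner_nonneg (P : Set (Fin s)) hxA hn fun i hi hni => ?_
      exact hcase (huniq i hni ▸ hi)
  -- pol A is convex
  have hconv : Convex ℝ (pol A) := by
    intro y1 h1 y2 h2 a b ha hb hab
    intro z hz
    have e : (inner ℝ z (a • y1 + b • y2) : ℝ) = a * inner ℝ z y1 + b * inner ℝ z y2 := by
      rw [inner_add_right, real_inner_smul_right, real_inner_smul_right]
    rw [e]
    calc (-1 : ℝ) = a * (-1) + b * (-1) := by ring_nf; linarith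
      _ ≤ a * inner ℝ z y1 + b * inner ℝ z y2 := by
          gcongr <;> [exact h1 z hz; exact h2 z hz]
  -- pol A is closed
  have hclosed : IsClosed (pol A) := by
    have : pol A = ⋂ z ∈ A, {y : E d | (-1 : ℝ) ≤ inner ℝ z y} := by
      ext y; simp [pol]
    rw [this]
    exact isClosed_biInter fun z _ =>
      isClosed_le continuous_const (Continuous.inner continuous_const continuous_id)
  -- pol A is bounded: 0 ∈ interior A gives a ball inside A
  obtain ⟨r, hr, hball⟩ := Metric.isOpen_iff.1 isOpen_interior 0 h0
  have hballA : Metric.ball (0 : E d) r ⊆ A := hball.trans interior_subset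
  have hpolbdd : Bornology.IsBounded (pol A) := by
    rw [Metric.isBounded_iff_subset_closedBall 0]
    refine ⟨2 / r, fun y hy => ?_⟩
    rw [Metric.mem_closedBall, dist_zero_right]
    by_cases hy0 : y = 0
    · simp [hy0]; positivity
    · have hny : 0 < ‖y‖ := norm_pos_iff.mpr hy0
      set z : E d := -((r / 2 / ‖y‖) • y) with hz
      have hzA : z ∈ A := by
        apply hballA
        rw [Metric.mem_ball, dist_zero_right, hz, norm_neg, norm_smul,
          Real.norm_eq_abs, abs_of_pos (by positivity)]
        rw [div_mul_cancel₀ _ (ne_of_gt hny)]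
        linarith
      have := hy z hzA
      rw [hz, inner_neg_left, real_inner_smul_left, real_inner_self_eq_norm_sq] at this
      have h2 : r / 2 / ‖y‖ * ‖y‖ ^ 2 = r / 2 * ‖y‖ := by
        field_simp
      rw [h2] at this
      -- -1 ≤ -(r/2 * ‖y‖)  →  ‖y‖ ≤ 2/r
      have h3 : r / 2 * ‖y‖ ≤ 1 := by linarith
      calc ‖y‖ = (r / 2 * ‖y‖) / (r / 2) := by field_simp
        _ ≤ 1 / (r / 2) := by gcongr
        _ = 2 / r := by field_simp
  have hcomp : IsCompact (pol A) := Metric.isCompact_of_isClosed_isBounded hclosed hpolbdd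
  -- x pairs nonnegatively with everything in pol A
  have hall : ∀ y ∈ pol A, 0 ≤ (inner ℝ x y : ℝ) := by
    have hKM := closure_convexHull_extremePoints hcomp hconv
    have hsub : pol A ⊆ {y : E d | 0 ≤ (inner ℝ x y : ℝ)} := by
      rw [← hKM]
      refine closure_minimal ?_ (isClosed_le continuous_const
        (Continuous.inner continuous_const continuous_id))
      refine convexHull_min hkey (convex_halfSpace_ge ?_ 0)
      exact ⟨fun a b => inner_add_right x a b, fun c a => real_inner_smul_right x a c⟩
    exact fun y hy => hsub hy
  -- A is bounded, so a small negative multiple of x lies in pol A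
  by_contra hx0
  have hnx : 0 < ‖x‖ := norm_pos_iff.mpr hx0
  have hAcomp : IsCompact A := hF ▸ (F.finite_toSet.isCompact_convexHull ℝ)
  obtain ⟨R, hR⟩ := hAcomp.isBounded.subset_closedBall 0
  have hRpos : 0 < max R 1 := lt_max_of_lt_right one_pos
  set y : E d := -(((max R 1)⁻¹ * ‖x‖⁻¹) • x) with hy
  have hypol : y ∈ pol A := by
    intro z hz
    rw [hy, inner_neg_right, real_inner_smul_right, neg_le, neg_neg]
    have hcs : (inner ℝ z x : ℝ) ≤ ‖z‖ * ‖x‖ := real_inner_le_norm z x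
    have hzR : ‖z‖ ≤ max R 1 := le_trans (by simpa [dist_zero_right] using hR hz) (le_max_left _ _)
    calc (max R 1)⁻¹ * ‖x‖⁻¹ * inner ℝ z x ≤ (max R 1)⁻¹ * ‖x‖⁻¹ * (‖z‖ * ‖x‖) := by
          exact mul_le_mul_of_nonneg_left hcs (by positivity)
      _ ≤ (max R 1)⁻¹ * ‖x‖⁻¹ * (max R 1 * ‖x‖) := by gcongr
      _ = 1 := by field_simp
  have := hall y hypol
  rw [hy, inner_neg_right, real_inner_smul_right, real_inner_self_eq_norm_sq] at this
  nlinarith [sq_nonneg ‖x‖, mul_pos (mul_pos (inv_pos.mpr hRpos) (inv_pos.mpr hnx)) (mul_pos hnx hnx)]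

end GNPPaper
end
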